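/- Let (T,w) be a canonical weighted tree with exactly two centroids c1, c2 and total weight n. Then every proper subtree of the component T1 of T − c1c2 containing c1 (i.e., every connected component of T1 − c1) has weight at most n/2 − 1, and likewise for T2. -/

import Mathlib

open SimpleGraph
open scoped Classical

/-- Weight of the connected component of `u` in `T - v`: total weight of all vertices
reachable from `u` by a walk avoiding `v`. -/
noncomputable def compWeight {V : Type*} [Fintype V] (T : SimpleGraph V) (w : V → ℕ)
    (v u : V) : ℕ :=
  ∑ y : V, if ∃ p : T.Walk u y, v ∉ p.support then w y else 0

/-- The heaviest subtree weight of `v`: maximum weight of a connected component of `T - v`. -/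
noncomputable def hs {V : Type*} [Fintype V] (T : SimpleGraph V) (w : V → ℕ) (v : V) : ℕ :=
  Finset.univ.sup fun u => compWeight T w v u

/-- A centroid is a vertex minimizing the heaviest subtree weight. -/
def IsCentroid {V : Type*} [Fintype V] (T : SimpleGraph V) (w : V → ℕ) (v : V) : Prop :=
  ∀ u, hs T w v ≤ hs T w u
/-- A leaf is a vertex with exactly one neighbor. -/
def IsLeaf {V : Type*} (T : SimpleGraph V) (v : V) : Prop :=
  (T.neighborSet v).ncard = 1

/-- A weighted tree is canonical if the zero-weight vertices form an independent set
and every leaf has positive weight. -/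
def Canonical {V : Type*} (T : SimpleGraph V) (w : V → ℕ) : Prop :=
  (∀ u v, T.Adj u v → ¬(w u = 0 ∧ w v = 0)) ∧ (∀ v, IsLeaf T v → 0 < w v)

/-!
If `c` is a centroid and `x` a neighbour of `c`, every branch of `T - x` is either the branch
containing `c`, of weight `n - compWeight c x`, or lies inside the branch of `c` containing `x`
minus `x` itself. Hence `hs x ≤ hs c` as soon as `n ≤ hs c + compWeight c x`, and `x` is a
centroid as well. Applied to the first step of the path between two centroids, this shows
that when there are exactly two centroids they are adjacent; then `n ≤ 2 hs c₁`, and a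
component of `T₁ - c₁` of weight at least `n / 2` would make its vertex adjacent to `c₁` a
third centroid.
-/

namespace SimpleGraph

variable {V : Type*} {G : SimpleGraph V} {a b u v x y z : V}

def ReachableAvoiding (G : SimpleGraph V) (v u y : V) : Prop := ∃ p : G.Walk u y, v ∉ p.support

namespace ReachableAvoiding

lemma refl (h : u ≠ v) : G.ReachableAvoiding v u u :=
  ⟨Walk.nil, by simpa using h.symm⟩

lemma symm (h : G.ReachableAvoiding v u y) : G.ReachableAvoiding v y u := by
  obtain ⟨p, hp⟩ := h
  exact ⟨p.reverse, by simpa using hp⟩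

lemma trans (h₁ : G.ReachableAvoiding v u y) (h₂ : G.ReachableAvoiding v y z) :
    G.ReachableAvoiding v u z := by
  obtain ⟨p, hp⟩ := h₁
  obtain ⟨q, hq⟩ := h₂
  exact ⟨p.append q, by rw [Walk.mem_support_append_iff]; tauto⟩

lemma ne_left (h : G.ReachableAvoiding v u y) : u ≠ v := by
  obtain ⟨p, hp⟩ := h
  exact fun huv => hp (huv ▸ p.start_mem_support)

lemma ne_right (h : G.ReachableAvoiding v u y) : y ≠ v := h.symm.ne_left

lemma of_not_reachableAvoiding (hvu : ¬ G.ReachableAvoiding x v u)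
    (h : G.ReachableAvoiding x u y) : G.ReachableAvoiding v u y := by
  obtain ⟨p, hp⟩ := h
  by_cases hv : v ∈ p.support
  · exact absurd (ReachableAvoiding.symm
      ⟨p.takeUntil v hv, fun hx => hp (p.support_takeUntil_subset_support hv hx)⟩) hvu
  · exact ⟨p, hv⟩

end ReachableAvoiding

lemma Connected.reachableAvoiding_or (hG : G.Connected) (hab : a ≠ b) (y : V) :
    G.ReachableAvoiding b a y ∨ G.ReachableAvoiding a b y := by
  obtain ⟨p, hp⟩ := (hG.preconnected y a).exists_isPath
  by_cases hb : b ∈ p.support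
  · exact .inr ⟨(p.takeUntil b hb).reverse,
      by simpa using Walk.endpoint_notMem_support_takeUntil hp hb hab⟩
  · exact .inl ⟨p.reverse, by simpa using hb⟩

lemma IsAcyclic.not_reachableAvoiding_and (hG : G.IsAcyclic) (hab : G.Adj a b) (y : V) :
    ¬ (G.ReachableAvoiding b a y ∧ G.ReachableAvoiding a b y) := by
  rintro ⟨⟨p, hbp⟩, ⟨q, haq⟩⟩
  have hb := hG.mem_support_of_ne_mem_support_of_adj_of_isPath p.reverse.bypass_isPath
    q.reverse.bypass_isPath hab fun ha =>
      haq (by simpa using q.reverse.support_bypass_subset_support ha)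
  exact hbp (by simpa using p.reverse.support_bypass_subset_support hb)

lemma IsBridge.reachableAvoiding_of_reachable (hab : G.IsBridge s(a, b))
    (h : (G.deleteEdges {s(a, b)}).Reachable a u) : G.ReachableAvoiding b a u := by
  obtain ⟨p⟩ := h
  have hb : b ∉ p.support := fun hb => isBridge_iff.mp hab ⟨p.takeUntil b hb⟩
  exact ⟨p.mapLe (deleteEdges_le _), by rwa [Walk.support_mapLe_eq_support]⟩

lemma Walk.exists_adj_reachableAvoiding (p : G.Walk a u) (hau : a ≠ u) :
    ∃ x ∈ p.support, G.Adj a x ∧ G.ReachableAvoiding a x u := by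
  have hp := p.bypass_isPath
  cases h : p.bypass with
  | nil => exact absurd rfl hau
  | @cons _ x _ hax q =>
    rw [h, Walk.cons_isPath_iff] at hp
    have hx : x ∈ p.bypass.support := by simp [h]
    exact ⟨x, p.support_bypass_subset_support hx, hax, q, hp.2⟩

end SimpleGraph

section Weights

variable {V : Type*} [Fintype V] {T : SimpleGraph V} {w : V → ℕ} {a b u v x : V}

lemma compWeight_eq_sum :
    compWeight T w v u = ∑ y, if T.ReachableAvoiding v u y then w y else 0 := rfl

lemma compWeight_le_hs : compWeight T w v u ≤ hs T w v :=
  Finset.le_sup (Finset.mem_univ u)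

lemma compWeight_congr (h : T.ReachableAvoiding v u x) :
    compWeight T w v u = compWeight T w v x := by
  have hiff (y : V) : T.ReachableAvoiding v u y ↔ T.ReachableAvoiding v x y :=
    ⟨h.symm.trans, h.trans⟩
  simp only [compWeight_eq_sum, hiff]

lemma sum_le_compWeight_add_compWeight (hT : T.Connected) (hab : a ≠ b) :
    ∑ y, w y ≤ compWeight T w b a + compWeight T w a b := by
  simp only [compWeight_eq_sum, ← Finset.sum_add_distrib]
  refine Finset.sum_le_sum fun y _ => ?_
  rcases hT.reachableAvoiding_or hab y with h | h <;> simp [h]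

lemma compWeight_add_compWeight (hT : T.IsTree) (hab : T.Adj a b) :
    compWeight T w b a + compWeight T w a b = ∑ y, w y := by
  simp only [compWeight_eq_sum, ← Finset.sum_add_distrib]
  refine Finset.sum_congr rfl fun y _ => ?_
  have hdisj := hT.isAcyclic.not_reachableAvoiding_and hab y
  rcases hT.connected.reachableAvoiding_or hab.ne y with h | h
  · rw [if_pos h, if_neg fun h' => hdisj ⟨h, h'⟩, add_zero]
  · rw [if_neg fun h' => hdisj ⟨h', h⟩, if_pos h, zero_add]

/-- If `u` lies beyond `x` as seen from `v`, its branch at `x` and `x` itself both belong to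
the branch of `x` at `v`. -/
lemma compWeight_add_le_compWeight (hT : T.Connected) (hvx : v ≠ x)
    (hu : ¬ T.ReachableAvoiding x v u) : compWeight T w x u + w x ≤ compWeight T w v x := by
  have hxu : T.ReachableAvoiding v x u :=
    (hT.reachableAvoiding_or hvx u).resolve_left hu
  rw [compWeight_eq_sum, compWeight_eq_sum, ← Finset.add_sum_erase _ _ (Finset.mem_univ x),
    ← Finset.add_sum_erase _ _ (Finset.mem_univ x),
    if_neg fun h => h.ne_right rfl, if_pos (ReachableAvoiding.refl hvx.symm), zero_add, add_comm]
  gcongr with y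
  split_ifs with h h'
  · exact le_rfl
  · exact absurd (hxu.trans (h.of_not_reachableAvoiding hu)) h'
  all_goals exact Nat.zero_le _

lemma hs_le_of_adj (hT : T.IsTree) (hvx : T.Adj v x) :
    hs T w x ≤ max (∑ y, w y - compWeight T w v x) (compWeight T w v x - w x) := by
  refine Finset.sup_le fun u _ => ?_
  by_cases hu : T.ReachableAvoiding x v u
  · have := compWeight_add_compWeight (w := w) hT hvx
    rw [← compWeight_congr hu]
    exact le_max_of_le_left (by omega)
  · have := compWeight_add_le_compWeight (w := w) hT.connected hvx.ne hu
    exact le_max_of_le_right (by omega)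

lemma IsCentroid.of_adj (hv : IsCentroid T w v) (hT : T.IsTree) (hvx : T.Adj v x)
    (h : ∑ y, w y ≤ hs T w v + compWeight T w v x) : IsCentroid T w x := by
  have hx : compWeight T w v x ≤ hs T w v := compWeight_le_hs
  refine fun u => le_trans ?_ (hv u)
  exact (hs_le_of_adj hT hvx).trans (max_le (by omega) (by omega))

lemma IsCentroid.exists_adj_isCentroid (hT : T.IsTree) (ha : IsCentroid T w a)
    (hb : IsCentroid T w b) (hab : a ≠ b) : ∃ x, T.Adj a x ∧ IsCentroid T w x := by
  obtain ⟨p⟩ := hT.connected.preconnected a b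
  obtain ⟨x, -, hax, hxb⟩ := p.exists_adj_reachableAvoiding hab
  refine ⟨x, hax, ha.of_adj hT hax ?_⟩
  have := sum_le_compWeight_add_compWeight (w := w) hT.connected hab
  have : compWeight T w b a ≤ hs T w a := compWeight_le_hs.trans (hb a)
  rw [compWeight_congr hxb]
  omega

lemma compWeight_le_of_centroids_eq_pair (hT : T.IsTree) (hab : a ≠ b)
    (hcent : {v | IsCentroid T w v} = {a, b}) (hu : u ≠ a)
    (hr : (T.deleteEdges {s(a, b)}).Reachable a u) :
    compWeight T w a u ≤ (∑ v, w v) / 2 - 1 := by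
  have hcent' : ∀ x, IsCentroid T w x ↔ x = a ∨ x = b := fun x => Set.ext_iff.mp hcent x
  have ha : IsCentroid T w a := (hcent' a).mpr (.inl rfl)
  have hb : IsCentroid T w b := (hcent' b).mpr (.inr rfl)
  have hadj : T.Adj a b := by
    obtain ⟨x, hax, hx⟩ := ha.exists_adj_isCentroid hT hb hab
    rcases (hcent' x).mp hx with rfl | rfl
    · exact absurd rfl hax.ne
    · exact hax
  have hhalf : ∑ v, w v ≤ 2 * hs T w a := by
    have := compWeight_add_compWeight (w := w) hT hadj
    have : compWeight T w b a ≤ hs T w a := compWeight_le_hs.trans (hb a)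
    have : compWeight T w a b ≤ hs T w a := compWeight_le_hs
    omega
  have hbridge := isAcyclic_iff_forall_adj_isBridge.mp hT.isAcyclic hadj
  obtain ⟨p, hbp⟩ := hbridge.reachableAvoiding_of_reachable hr
  obtain ⟨x, hxp, hax, hxu⟩ := p.exists_adj_reachableAvoiding hu.symm
  have hx : ¬ IsCentroid T w x := by
    rw [hcent']
    rintro (rfl | rfl)
    · exact hax.ne rfl
    · exact hbp hxp
  have hlt : hs T w a + compWeight T w a x < ∑ v, w v := by
    contrapose! hx
    exact ha.of_adj hT hax hx
  rw [← compWeight_congr hxu]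
  omega

end Weights

theorem stmt_7_general {V : Type*} [Fintype V] (T : SimpleGraph V) (w : V → ℕ) (hT : T.IsTree)
    (c1 c2 : V) (h12 : c1 ≠ c2)
    (hcent : {v : V | IsCentroid T w v} = {c1, c2}) :
    (∀ u, u ≠ c1 → (T.deleteEdges {s(c1, c2)}).Reachable c1 u →
      compWeight T w c1 u ≤ (∑ v, w v) / 2 - 1) ∧
    (∀ u, u ≠ c2 → (T.deleteEdges {s(c1, c2)}).Reachable c2 u →
      compWeight T w c2 u ≤ (∑ v, w v) / 2 - 1) := by
  refine ⟨fun u hu hr => compWeight_le_of_centroids_eq_pair hT h12 hcent hu hr,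
    fun u hu hr => ?_⟩
  rw [Set.pair_comm] at hcent
  rw [Sym2.eq_swap] at hr
  exact compWeight_le_of_centroids_eq_pair hT h12.symm hcent hu hr

/-- In a canonical weighted tree with exactly two centroids c1, c2 and total weight n,
every connected component of T1 - c1 (where T1 is the component of c1 in T minus the
edge c1c2) has weight at most n/2 - 1, and likewise on the other side. -/
theorem stmt_7 {V : Type*} [Fintype V] (T : SimpleGraph V) (w : V → ℕ) (hT : T.IsTree)
    (hc : Canonical T w) (c1 c2 : V) (h12 : c1 ≠ c2)
    (hcent : {v : V | IsCentroid T w v} = {c1, c2}) :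
    (∀ u, u ≠ c1 → (T.deleteEdges {s(c1, c2)}).Reachable c1 u →
      compWeight T w c1 u ≤ (∑ v, w v) / 2 - 1) ∧
    (∀ u, u ≠ c2 → (T.deleteEdges {s(c1, c2)}).Reachable c2 u →
      compWeight T w c2 u ≤ (∑ v, w v) / 2 - 1) :=
  stmt_7_general T w hT c1 c2 h12 hcent
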